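/- (The limiting rank is uniformly distributed.) Let f be a probability density on ℝ^d such that for every c ≥ 0 the level set { z : f(z) = c } has Lebesgue measure zero, and let μ be the probability measure with density f. Define p(x) = μ{ z : f(z) ≤ f(x) } = ∫_{{z : f(z) ≤ f(x)}} f(z) dz. Then the pushforward of μ under the map x ↦ p(x) is the uniform (Lebesgue) probability measure on the interval [0,1]; equivalently, if X is a random vector with density f, then p(X) is uniformly distributed on [0,1], regardless of the underlying density f. -/

import Mathlib

/-!
Let `ν` be the law of `f` under `μ` and `F` its distribution function. Then `p = F ∘ f`, so the
law of `p` under `μ` is the law of `F` under `ν`. Null level sets of `f` make `ν` atomless, so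
`F` is continuous; for `u ∈ [0, 1)` the set `{F ≤ u}` is then a closed half-line `(-∞, a]` with
`F a = u` (or empty when `u = 0`), whence `ν {F ≤ u} = u`: the probability integral transform.
-/

open MeasureTheory
open scoped ENNReal

/-- The limiting rank `p(x) = ∫_{{z : f(z) ≤ f(x)}} f(z) dz`. -/
noncomputable def limitRank {d : ℕ} (f : EuclideanSpace ℝ (Fin d) → ℝ)
    (x : EuclideanSpace ℝ (Fin d)) : ℝ :=
  ∫ z in {z | f z ≤ f x}, f z

open Set ProbabilityTheory

theorem Monotone.exists_preimage_Iic_eq_Iic {α β : Type*}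
    [ConditionallyCompleteLinearOrder α] [TopologicalSpace α] [OrderTopology α]
    [DenselyOrdered α] [LinearOrder β] [TopologicalSpace β] [OrderClosedTopology β]
    {g : α → β} (hg_mono : Monotone g) (hg_cont : Continuous g) {u : β}
    (hne : (g ⁻¹' Iic u).Nonempty) {T : α} (hT : u < g T) :
    ∃ a, g ⁻¹' Iic u = Iic a ∧ g a = u := by
  set s := g ⁻¹' Iic u
  have hub : ∀ t ∈ s, t ≤ T := fun t ht =>
    not_lt.1 fun hTt => (hT.trans_le (hg_mono hTt.le)).not_ge ht
  have hbdd : BddAbove s := ⟨T, hub⟩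
  have hclosed : IsClosed s := isClosed_Iic.preimage hg_cont
  have ha : sSup s ∈ s := hclosed.csSup_mem hne hbdd
  refine ⟨sSup s, ?_, ?_⟩
  · rw [← lowerClosure_eq_Iic_csSup hne hbdd hclosed,
      ((isLowerSet_Iic u).preimage hg_mono).lowerClosure]
  · obtain ⟨t, ⟨hat, -⟩, hgt⟩ :=
      intermediate_value_Icc (hub _ ha) hg_cont.continuousOn ⟨ha, hT.le⟩
    have hts : t ∈ s := le_of_eq hgt
    rwa [← le_antisymm (le_csSup hbdd hts) hat]

theorem StieltjesFunction.continuous_of_nullSingletonClass (F : StieltjesFunction ℝ)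
    [NullSingletonClass F.measure] : Continuous F := by
  refine continuous_iff_continuousAt.2 fun a => continuousAt_iff_continuous_left'_right'.2 ⟨?_, ?_⟩
  · have hjump : F a ≤ Function.leftLim F a := by
      rw [← sub_nonpos, ← ENNReal.ofReal_eq_zero, ← F.measure_singleton a]
      exact MeasureTheory.measure_singleton a
    exact F.mono.continuousWithinAt_Iio_iff_leftLim_eq.2
      (le_antisymm (F.mono.leftLim_le le_rfl) hjump)
  · exact (F.right_continuous a).mono Ioi_subset_Ici_self

namespace ProbabilityTheory

variable (ν : Measure ℝ) [IsProbabilityMeasure ν] [NullSingletonClass ν]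

theorem continuous_cdf : Continuous (cdf ν) := by
  have : NullSingletonClass (cdf ν).measure := by rwa [measure_cdf]
  exact (cdf ν).continuous_of_nullSingletonClass

theorem measure_cdf_preimage_Iic (u : ℝ) : ν (cdf ν ⁻¹' Iic u) = ENNReal.ofReal (min u 1) := by
  rcases le_or_gt 1 u with hu1 | hu1
  · have huniv : cdf ν ⁻¹' Iic u = univ :=
      eq_univ_of_forall fun t => (cdf_le_one ν t).trans hu1
    rw [huniv, measure_univ, min_eq_right hu1, ENNReal.ofReal_one]
  rw [min_eq_left hu1.le]
  obtain hempty | hne := (cdf ν ⁻¹' Iic u).eq_empty_or_nonempty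
  · have hu0 : u ≤ 0 := by
      by_contra! hu0
      obtain ⟨t, ht⟩ := ((tendsto_cdf_atBot ν).eventually (eventually_lt_nhds hu0)).exists
      exact hempty.subset (show t ∈ cdf ν ⁻¹' Iic u from ht.le)
    rw [hempty, measure_empty, ENNReal.ofReal_of_nonpos hu0]
  · obtain ⟨T, hT⟩ := ((tendsto_cdf_atTop ν).eventually (eventually_gt_nhds hu1)).exists
    obtain ⟨a, hIic, hFa⟩ :=
      (monotone_cdf ν).exists_preimage_Iic_eq_Iic (continuous_cdf ν) hne hT
    rw [hIic, ← ofReal_cdf, hFa]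

theorem map_cdf_eq_restrict_Icc : ν.map (cdf ν) = volume.restrict (Icc 0 1) := by
  refine Measure.ext_of_Iic _ _ fun u => ?_
  rw [Measure.map_apply (monotone_cdf ν).measurable measurableSet_Iic, measure_cdf_preimage_Iic,
    Measure.restrict_apply measurableSet_Iic, inter_comm, ← Ici_inter_Iic, inter_assoc,
    Iic_inter_Iic, Ici_inter_Iic, Real.volume_Icc, sub_zero, min_comm]

end ProbabilityTheory

theorem MeasureTheory.Measure.nullSingletonClass_map_of_measure_level_eq_zero
    {α β : Type*} [MeasurableSpace α] [MeasurableSpace β] [MeasurableSingletonClass β]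
    {μ ρ : Measure α} {f : α → β} (hf : Measurable f) (hμρ : μ ≪ ρ)
    (hlevels : ∀ c, ρ {x | f x = c} = 0) : NullSingletonClass (μ.map f) :=
  ⟨fun c => by
    rw [Measure.map_apply hf (measurableSet_singleton c)]
    exact hμρ (hlevels c)⟩

theorem limitRank_eq_cdf_map_comp {d : ℕ} {f : EuclideanSpace ℝ (Fin d) → ℝ}
    (hf_meas : Measurable f) (hf_nonneg : ∀ x, 0 ≤ f x)
    [IsProbabilityMeasure (volume.withDensity fun x => ENNReal.ofReal (f x))] :
    limitRank f = cdf ((volume.withDensity fun x => ENNReal.ofReal (f x)).map f) ∘ f := by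
  have := Measure.isProbabilityMeasure_map (μ := volume.withDensity fun x => ENNReal.ofReal (f x))
    hf_meas.aemeasurable
  ext x
  rw [limitRank, integral_eq_lintegral_of_nonneg_ae (.of_forall hf_nonneg)
      hf_meas.aestronglyMeasurable.restrict, Function.comp_apply, cdf_eq_real, measureReal_def,
    Measure.map_apply hf_meas measurableSet_Iic, withDensity_apply _ (hf_meas measurableSet_Iic)]
  rfl

/-- The limiting rank is uniformly distributed: if every level set of the
density `f` is Lebesgue-null, then the pushforward of the measure `μ` with density `f` under
`x ↦ p(x)` is the uniform probability measure on `[0,1]`. -/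
theorem limitRank_uniformly_distributed
    (d : ℕ) (f : EuclideanSpace ℝ (Fin d) → ℝ)
    (hf_meas : Measurable f) (hf_nonneg : ∀ x, 0 ≤ f x)
    (hf_prob : ∫⁻ x, ENNReal.ofReal (f x) = 1)
    (hf_levels : ∀ c : ℝ, 0 ≤ c → volume {z | f z = c} = 0) :
    Measure.map (limitRank f) (volume.withDensity fun x => ENNReal.ofReal (f x)) =
      volume.restrict (Set.Icc (0 : ℝ) 1) := by
  set μ := volume.withDensity fun x => ENNReal.ofReal (f x)
  have : IsProbabilityMeasure μ :=
    ⟨by rw [withDensity_apply _ MeasurableSet.univ, Measure.restrict_univ, hf_prob]⟩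
  have hlevels (c : ℝ) : volume {z | f z = c} = 0 := by
    rcases le_or_gt 0 c with hc | hc
    · exact hf_levels c hc
    · have hempty : {z | f z = c} = ∅ :=
        eq_empty_of_forall_notMem fun z hz => (hf_nonneg z).not_gt (hz ▸ hc)
      rw [hempty, measure_empty]
  have : IsProbabilityMeasure (μ.map f) := Measure.isProbabilityMeasure_map hf_meas.aemeasurable
  have : NullSingletonClass (μ.map f) :=
    Measure.nullSingletonClass_map_of_measure_level_eq_zero hf_meas
      (withDensity_absolutelyContinuous _ _) hlevels
  rw [limitRank_eq_cdf_map_comp hf_meas hf_nonneg,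
    ← Measure.map_map (monotone_cdf _).measurable hf_meas, map_cdf_eq_restrict_Icc]
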